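/- Let P be an equiangular convex polygon with n sides, and let Q be a regular n-gon contained in P whose sides are parallel to the corresponding sides of P. Then for every point p in the interior of Q, the sum of distances from p to the side-lines of P equals the (constant) Viviani sum of Q plus the sum of the distances between the corresponding parallel side-lines of P and Q; consequently the sum of distances from an interior point of P to the side-lines of P is constant on all of P. -/

import Mathlib

/-! On the closed side of the line `⟪a, q⟫ + γ = 0` the distance to it is the affine function
`(⟪a, p⟫ + γ) / ‖a‖`, so on a region lying on the closed side of all its side lines the sum of
distances is `⟪v, p⟫ + const` with `v = ∑ ‖aᵢ‖⁻¹ • aᵢ`. Constancy of this sum on the open set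
`interior Q` forces `v = 0`. Since `K` and `Q` share `v`, the two sums differ by the constant
`∑ (γᵢ - γ'ᵢ) / ‖aᵢ‖`, and the sum for `K` is constant on `K`. -/

open Metric
open scoped InnerProductSpace

noncomputable section

abbrev E2 := EuclideanSpace ℝ (Fin 2)

/-- The line `{q : αᵢ·q + γᵢ = 0}` in ℝ². -/
def line2 (a : E2) (γ : ℝ) : Set E2 := {q : E2 | ⟪a, q⟫_ℝ + γ = 0}

/-- The sum of the distances from `p` to the lines `Lᵢ`. -/
def sumDist {n : ℕ} (a : Fin n → E2) (γ : Fin n → ℝ) (p : E2) : ℝ :=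
  ∑ i, infDist p (line2 (a i) (γ i))

open Filter Topology

theorem eq_zero_of_eventually_inner_eq {F : Type*} [NormedAddCommGroup F]
    [InnerProductSpace ℝ F] {v p : F} (h : ∀ᶠ q in 𝓝 p, ⟪v, q⟫_ℝ = ⟪v, p⟫_ℝ) : v = 0 := by
  have hline : Tendsto (fun t : ℝ => p + t • v) (𝓝[≠] 0) (𝓝 p) := by
    exact ((by fun_prop : Continuous fun t : ℝ => p + t • v).tendsto' 0 p (by simp)).mono_left
      nhdsWithin_le_nhds
  obtain ⟨t, ht, ht0⟩ := ((hline.eventually h).and self_mem_nhdsWithin).exists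
  rw [inner_add_right, real_inner_smul_right, real_inner_self_eq_norm_sq] at ht
  have : t * ‖v‖ ^ 2 = 0 := by linarith
  simpa [Set.mem_compl_singleton_iff.mp ht0] using this

theorem infDist_line2 {a : E2} (ha : a ≠ 0) (γ : ℝ) (p : E2) :
    infDist p (line2 a γ) = |⟪a, p⟫_ℝ + γ| / ‖a‖ := by
  have hna : 0 < ‖a‖ := norm_pos_iff.mpr ha
  set foot : E2 := p - ((⟪a, p⟫_ℝ + γ) / ‖a‖ ^ 2) • a
  have hfoot : foot ∈ line2 a γ := by
    simp only [line2, Set.mem_ofPred_eq, foot, inner_sub_right, real_inner_smul_right,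
      real_inner_self_eq_norm_sq]
    field_simp
    ring
  have hdist : dist p foot = |⟪a, p⟫_ℝ + γ| / ‖a‖ := by
    simp only [dist_eq_norm, foot, sub_sub_cancel, norm_smul, Real.norm_eq_abs, abs_div,
      abs_of_nonneg (sq_nonneg ‖a‖)]
    field_simp
  refine le_antisymm (hdist ▸ infDist_le_dist_of_mem hfoot) ((le_infDist ⟨foot, hfoot⟩).2 ?_)
  intro y hy
  have hy : ⟪a, y⟫_ℝ = -γ := by simp only [line2, Set.mem_ofPred_eq] at hy; linarith
  rw [div_le_iff₀ hna, dist_eq_norm]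
  calc |⟪a, p⟫_ℝ + γ| = |⟪a, p - y⟫_ℝ| := by rw [inner_sub_right, hy, sub_neg_eq_add]
    _ ≤ ‖a‖ * ‖p - y‖ := abs_real_inner_le_norm a (p - y)
    _ = ‖p - y‖ * ‖a‖ := mul_comm _ _

def unitNormalSum {n : ℕ} (a : Fin n → E2) : E2 := ∑ i, ‖a i‖⁻¹ • a i

theorem sumDist_eq_inner_unitNormalSum_add {n : ℕ} {a : Fin n → E2} (ha : ∀ i, a i ≠ 0)
    {γ : Fin n → ℝ} {p : E2} (hp : ∀ i, 0 ≤ ⟪a i, p⟫_ℝ + γ i) :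
    sumDist a γ p = ⟪unitNormalSum a, p⟫_ℝ + ∑ i, γ i / ‖a i‖ := by
  simp only [sumDist, unitNormalSum, sum_inner, real_inner_smul_left, ← Finset.sum_add_distrib]
  refine Finset.sum_congr rfl fun i _ => ?_
  rw [infDist_line2 (ha i), abs_of_nonneg (hp i), add_div, inv_mul_eq_div]

theorem unitNormalSum_eq_zero_of_sumDist_const {n : ℕ} {a : Fin n → E2} (ha : ∀ i, a i ≠ 0)
    {γ : Fin n → ℝ} {U : Set E2} (hU : IsOpen U) (hne : U.Nonempty)
    (hside : ∀ i, ∀ p ∈ U, 0 ≤ ⟪a i, p⟫_ℝ + γ i)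
    (hconst : ∀ p ∈ U, ∀ q ∈ U, sumDist a γ p = sumDist a γ q) :
    unitNormalSum a = 0 := by
  obtain ⟨p, hp⟩ := hne
  refine eq_zero_of_eventually_inner_eq (p := p) ?_
  filter_upwards [hU.mem_nhds hp] with q hq
  have := hconst q hq p hp
  rwa [sumDist_eq_inner_unitNormalSum_add ha (fun i => hside i q hq),
    sumDist_eq_inner_unitNormalSum_add ha (fun i => hside i p hp), add_left_inj] at this

theorem equiangular_viviani_general {n : ℕ} (a : Fin n → E2) (γ γ' : Fin n → ℝ)
    (ha : ∀ i, a i ≠ 0)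
    (K Q : Set E2) (hQK : Q ⊆ K)
    (hQint : (interior Q).Nonempty)
    (hsideK : ∀ i, ∀ p ∈ K, 0 ≤ ⟪a i, p⟫_ℝ + γ i)
    (hsideQ : ∀ i, ∀ p ∈ Q, 0 ≤ ⟪a i, p⟫_ℝ + γ' i)
    (hQviviani : ∀ p ∈ interior Q, ∀ q ∈ interior Q, sumDist a γ' p = sumDist a γ' q) :
    (∀ p ∈ interior Q,
      sumDist a γ p = sumDist a γ' p + ∑ i, (γ i - γ' i) / ‖a i‖) ∧
    (∀ p ∈ interior K, ∀ q ∈ interior K, sumDist a γ p = sumDist a γ q) := by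
  have hsumK : ∀ p ∈ K, sumDist a γ p = ⟪unitNormalSum a, p⟫_ℝ + ∑ i, γ i / ‖a i‖ :=
    fun p hp => sumDist_eq_inner_unitNormalSum_add ha (fun i => hsideK i p hp)
  refine ⟨fun p hp => ?_, fun p hp q hq => ?_⟩
  · have hpQ := interior_subset hp
    rw [hsumK p (hQK hpQ), sumDist_eq_inner_unitNormalSum_add ha (fun i => hsideQ i p hpQ),
      add_assoc, ← Finset.sum_add_distrib]
    simp only [← add_div, add_sub_cancel]
  · have hv : unitNormalSum a = 0 := unitNormalSum_eq_zero_of_sumDist_const ha isOpen_interior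
      hQint (fun i p hp => hsideQ i p (interior_subset hp)) hQviviani
    rw [hsumK p (interior_subset hp), hsumK q (interior_subset hq), hv, inner_zero_left,
      inner_zero_left]

/-- Let `K` be the region of an equiangular convex polygon with side lines
`Lᵢ = {q : aᵢ·q + γᵢ = 0}` (`K` on the nonnegative side of each), and let `Q ⊆ K` be the
region of a regular polygon, with side lines `Mᵢ = {q : aᵢ·q + γ'ᵢ = 0}` parallel to the
corresponding side lines of `K`, whose half-planes contain those of `Q` (`γ'ᵢ ≤ γᵢ`),
and whose Viviani sum is constant on its nonempty interior. Then for every `p` in the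
interior of `Q`, the sum of distances from `p` to the side lines of `K` equals the
Viviani sum of `Q` at `p` plus the sum `Σ (γᵢ - γ'ᵢ)/‖aᵢ‖` of the distances between the
corresponding parallel side lines; consequently the sum of distances to the side lines
of `K` is constant on the interior of `K`. -/
theorem equiangular_viviani {n : ℕ} (a : Fin n → E2) (γ γ' : Fin n → ℝ)
    (ha : ∀ i, a i ≠ 0)
    (K Q : Set E2) (hK : Convex ℝ K) (hQ : Convex ℝ Q) (hQK : Q ⊆ K)
    (hQint : (interior Q).Nonempty)
    (hsideK : ∀ i, ∀ p ∈ K, 0 ≤ ⟪a i, p⟫_ℝ + γ i)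
    (hsideQ : ∀ i, ∀ p ∈ Q, 0 ≤ ⟪a i, p⟫_ℝ + γ' i)
    (hbetween : ∀ i, γ' i ≤ γ i)
    (hQviviani : ∀ p ∈ interior Q, ∀ q ∈ interior Q, sumDist a γ' p = sumDist a γ' q) :
    (∀ p ∈ interior Q,
      sumDist a γ p = sumDist a γ' p + ∑ i, (γ i - γ' i) / ‖a i‖) ∧
    (∀ p ∈ interior K, ∀ q ∈ interior K, sumDist a γ p = sumDist a γ q) :=
  equiangular_viviani_general a γ γ' ha K Q hQK hQint hsideK hsideQ hQviviani
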